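/- Let ρ_0,…,ρ_{M-1} be a quantum state set with Gram operator G = Σ_m ρ_m, let 0 ≤ p ≤ 1, and let X be a positive semidefinite operator with X ≥ ρ_m for all m. For a ≥ 0 set s(a) = Tr X + Tr((aG − X)_+) − a·p. Then for every (M+1)-outcome POVM Π_0,…,Π_M with Tr(G Π_M) = p, the success probability satisfies Σ_{m=0}^{M-1} Tr(ρ_m Π_m) ≤ s(a) for every a ≥ 0, and also Σ_{m=0}^{M-1} Tr(ρ_m Π_m) ≤ 1 − p; hence it is at most min{1 − p, min_{a∈A} s(a)} for any finite set A ⊆ [0,∞). -/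

import Mathlib

/-!
If `Y ≥ ρ_m` for every `m`, then `∑_{m<M} Tr(ρ_m Π_m) ≤ ∑_{m<M} Tr(Y Π_m) = Tr Y - Tr(Y Π_M)`,
because `Tr(A Π) ≥ 0` for positive semidefinite `A` and `Π`. Taking `Y = G` gives the bound
`1 - p`. Taking `Y = X` and writing `Tr(X Π_M) = a p - Tr((aG - X) Π_M)`, the bound `s(a)` follows
from `Tr((aG - X) Π_M) ≤ Tr((aG - X)₊ Π_M) ≤ Tr((aG - X)₊)`, which uses `aG - X ≤ (aG - X)₊`,
`0 ≤ (aG - X)₊` and `0 ≤ Π_M ≤ 1`.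
-/

open Matrix
open scoped ComplexOrder

/-- Positive part `A₊` of a Hermitian matrix (junk value `0` on non-Hermitian input). -/
noncomputable def matPosPart {n : ℕ} (A : Matrix (Fin n) (Fin n) ℂ) : Matrix (Fin n) (Fin n) ℂ :=
  if hA : A.IsHermitian then
    (hA.eigenvectorUnitary : Matrix (Fin n) (Fin n) ℂ) *
      Matrix.diagonal (fun i => if 0 < hA.eigenvalues i then (hA.eigenvalues i : ℂ) else 0) *
      star (hA.eigenvectorUnitary : Matrix (Fin n) (Fin n) ℂ)
  else 0

/-- Projection `P₍>₎(A)` onto the span of eigenvectors of positive eigenvalues. -/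
noncomputable def matProjPos {n : ℕ} (A : Matrix (Fin n) (Fin n) ℂ) : Matrix (Fin n) (Fin n) ℂ :=
  if hA : A.IsHermitian then
    (hA.eigenvectorUnitary : Matrix (Fin n) (Fin n) ℂ) *
      Matrix.diagonal (fun i => if 0 < hA.eigenvalues i then (1 : ℂ) else 0) *
      star (hA.eigenvectorUnitary : Matrix (Fin n) (Fin n) ℂ)
  else 0

/-- Projection `P₍≥₎(A)` onto the span of eigenvectors of nonnegative eigenvalues. -/
noncomputable def matProjNonneg {n : ℕ} (A : Matrix (Fin n) (Fin n) ℂ) : Matrix (Fin n) (Fin n) ℂ :=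
  if hA : A.IsHermitian then
    (hA.eigenvectorUnitary : Matrix (Fin n) (Fin n) ℂ) *
      Matrix.diagonal (fun i => if 0 ≤ hA.eigenvalues i then (1 : ℂ) else 0) *
      star (hA.eigenvectorUnitary : Matrix (Fin n) (Fin n) ℂ)
  else 0

open scoped MatrixOrder

namespace Matrix

variable {ι 𝕜 : Type*} [Fintype ι] [RCLike 𝕜]

theorem trace_mul_nonneg {A B : Matrix ι ι 𝕜} (hA : 0 ≤ A) (hB : 0 ≤ B) :
    0 ≤ (A * B).trace := by
  classical
  obtain ⟨C, rfl⟩ := CStarAlgebra.nonneg_iff_eq_star_mul_self.mp hB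
  rw [← mul_assoc, trace_mul_cycle, star_eq_conjTranspose]
  exact (hA.posSemidef.mul_mul_conjTranspose_same C).trace_nonneg

theorem trace_mul_le_trace_mul_left {A B P : Matrix ι ι 𝕜} (hAB : A ≤ B) (hP : 0 ≤ P) :
    (A * P).trace ≤ (B * P).trace := by
  rw [← sub_nonneg, ← trace_sub, ← sub_mul]
  exact trace_mul_nonneg (sub_nonneg.mpr hAB) hP

theorem trace_mul_le_trace_mul_right {A P Q : Matrix ι ι 𝕜} (hA : 0 ≤ A) (hPQ : P ≤ Q) :
    (A * P).trace ≤ (A * Q).trace := by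
  rw [trace_mul_comm A, trace_mul_comm A]
  exact trace_mul_le_trace_mul_left hPQ hA

theorem sum_trace_mul_le_trace_sub [DecidableEq ι] {M : ℕ} {ρ E : ℕ → Matrix ι ι 𝕜}
    {Y : Matrix ι ι 𝕜} (hρY : ∀ m < M, ρ m ≤ Y) (hE : ∀ m < M + 1, 0 ≤ E m)
    (hEsum : ∑ m ∈ Finset.range (M + 1), E m = 1) :
    ∑ m ∈ Finset.range M, (ρ m * E m).trace ≤ Y.trace - (Y * E M).trace := by
  have hsum_conclusive : ∑ m ∈ Finset.range M, E m = 1 - E M := by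
    rw [eq_sub_iff_add_eq, ← Finset.sum_range_succ, hEsum]
  calc ∑ m ∈ Finset.range M, (ρ m * E m).trace
      ≤ ∑ m ∈ Finset.range M, (Y * E m).trace :=
        Finset.sum_le_sum fun m hm ↦ trace_mul_le_trace_mul_left (hρY m (Finset.mem_range.mp hm))
          (hE m (Nat.lt_succ_of_lt (Finset.mem_range.mp hm)))
    _ = Y.trace - (Y * E M).trace := by
        rw [← trace_sum, ← Finset.mul_sum, hsum_conclusive, Matrix.mul_sub, Matrix.mul_one,
          trace_sub]

end Matrix

section PositivePart

variable {n : ℕ} {A : Matrix (Fin n) (Fin n) ℂ}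

theorem matPosPart_eq_cfc (hA : A.IsHermitian) : matPosPart A = cfc (fun x : ℝ ↦ max x 0) A := by
  rw [hA.cfc_eq, IsHermitian.cfc, matPosPart, dif_pos hA, Unitary.conjStarAlgAut_apply]
  congr 3
  funext i
  split_ifs with h
  · simp [h.le]
  · simp [not_lt.mp h]

theorem matPosPart_nonneg (hA : A.IsHermitian) : 0 ≤ matPosPart A := by
  rw [matPosPart_eq_cfc hA]
  exact cfc_nonneg fun x _ ↦ le_max_right x 0

theorem le_matPosPart (hA : A.IsHermitian) : A ≤ matPosPart A := by
  conv_lhs => rw [← cfc_id' ℝ A hA.isSelfAdjoint]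
  rw [matPosPart_eq_cfc hA]
  exact cfc_mono fun x _ ↦ le_max_left x 0

theorem trace_mul_le_trace_matPosPart {E : Matrix (Fin n) (Fin n) ℂ} (hA : A.IsHermitian)
    (hE0 : 0 ≤ E) (hE1 : E ≤ 1) : (A * E).trace ≤ (matPosPart A).trace :=
  calc (A * E).trace ≤ (matPosPart A * E).trace :=
        trace_mul_le_trace_mul_left (le_matPosPart hA) hE0
    _ ≤ (matPosPart A * 1).trace := trace_mul_le_trace_mul_right (matPosPart_nonneg hA) hE1
    _ = (matPosPart A).trace := by rw [mul_one]

end PositivePart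

theorem stmt_9_general {n M : ℕ} (ρ : ℕ → Matrix (Fin n) (Fin n) ℂ)
    (hρ : ∀ m < M, (ρ m).PosSemidef)
    (hρsum : ∑ m ∈ Finset.range M, (ρ m).trace.re = 1)
    (G : Matrix (Fin n) (Fin n) ℂ) (hG : G = ∑ m ∈ Finset.range M, ρ m)
    (p : ℝ)
    (X : Matrix (Fin n) (Fin n) ℂ) (hX : X.PosSemidef)
    (hXρ : ∀ m < M, (X - ρ m).PosSemidef)
    (s : ℝ → ℝ)
    (hs : ∀ a : ℝ, s a = X.trace.re + (matPosPart ((a : ℂ) • G - X)).trace.re - a * p)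
    (Pm : ℕ → Matrix (Fin n) (Fin n) ℂ)
    (hPm : ∀ m < M + 1, (Pm m).PosSemidef)
    (hPsum : ∑ m ∈ Finset.range (M + 1), Pm m = 1)
    (hPI : (G * Pm M).trace.re = p) :
    (∀ a : ℝ, 0 ≤ a → ∑ m ∈ Finset.range M, ((ρ m * Pm m).trace).re ≤ s a) ∧
    (∑ m ∈ Finset.range M, ((ρ m * Pm m).trace).re ≤ 1 - p) ∧
    (∀ (A : Finset ℝ) (hA : A.Nonempty), (∀ a ∈ A, 0 ≤ a) →
      ∑ m ∈ Finset.range M, ((ρ m * Pm m).trace).re ≤ min (1 - p) (A.inf' hA s)) := by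
  have hPm_nonneg (m : ℕ) (hm : m < M + 1) : 0 ≤ Pm m := (hPm m hm).nonneg
  have hPM_le_one : Pm M ≤ 1 := hPsum ▸ Finset.single_le_sum
    (fun m hm ↦ hPm_nonneg m (Finset.mem_range.mp hm)) (Finset.self_mem_range_succ M)
  have hρ_le_G (m : ℕ) (hm : m < M) : ρ m ≤ G := hG ▸ Finset.single_le_sum
    (fun i hi ↦ (hρ i (Finset.mem_range.mp hi)).nonneg) (Finset.mem_range.mpr hm)
  have success_le (Y : Matrix (Fin n) (Fin n) ℂ) (hY : ∀ m < M, ρ m ≤ Y) :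
      ∑ m ∈ Finset.range M, ((ρ m * Pm m).trace).re ≤ Y.trace.re - (Y * Pm M).trace.re := by
    rw [← Complex.re_sum, ← Complex.sub_re]
    exact (Complex.le_def.mp (sum_trace_mul_le_trace_sub hY hPm_nonneg hPsum)).1
  have le_one_sub : ∑ m ∈ Finset.range M, ((ρ m * Pm m).trace).re ≤ 1 - p := by
    have htrG : G.trace.re = 1 := by rw [hG, trace_sum, Complex.re_sum, hρsum]
    simpa only [htrG, hPI] using success_le G hρ_le_G
  have hG_herm : G.IsHermitian := (hG ▸ Finset.sum_nonneg
    fun i hi ↦ (hρ i (Finset.mem_range.mp hi)).nonneg : 0 ≤ G).posSemidef.isHermitian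
  have le_s (a : ℝ) : ∑ m ∈ Finset.range M, ((ρ m * Pm m).trace).re ≤ s a := by
    have hpos := (Complex.le_def.mp <| trace_mul_le_trace_matPosPart
      ((hG_herm.smul (Complex.conj_ofReal a)).sub hX.isHermitian)
      (hPm_nonneg M M.lt_succ_self) hPM_le_one).1
    rw [sub_mul, smul_mul, trace_sub, trace_smul, Complex.sub_re, smul_eq_mul,
      Complex.re_ofReal_mul, hPI] at hpos
    linarith [success_le X hXρ, hs a]
  exact ⟨fun a _ ↦ le_s a, le_one_sub, fun A hA _ ↦
    le_min le_one_sub (Finset.le_inf' hA s fun a _ ↦ le_s a)⟩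

/-- With `s(a) = Tr X + Tr((aG − X)₊) − a·p` for a PSD `X` with `X ≥ ρ_m`
for all `m`, every `(M+1)`-outcome POVM with inconclusive probability `p` has success
probability at most `s(a)` for every `a ≥ 0` and at most `1 − p`; hence it is at most
`min{1 − p, min_{a ∈ A} s(a)}` for any finite set `A ⊆ [0,∞)`. -/
theorem stmt_9 {n M : ℕ} (hM : 0 < M) (ρ : ℕ → Matrix (Fin n) (Fin n) ℂ)
    (hρ : ∀ m < M, (ρ m).PosSemidef)
    (hρpos : ∀ m < M, 0 < (ρ m).trace.re)
    (hρsum : ∑ m ∈ Finset.range M, (ρ m).trace.re = 1)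
    (G : Matrix (Fin n) (Fin n) ℂ) (hG : G = ∑ m ∈ Finset.range M, ρ m)
    (p : ℝ) (hp0 : 0 ≤ p) (hp1 : p ≤ 1)
    (X : Matrix (Fin n) (Fin n) ℂ) (hX : X.PosSemidef)
    (hXρ : ∀ m < M, (X - ρ m).PosSemidef)
    (s : ℝ → ℝ)
    (hs : ∀ a : ℝ, s a = X.trace.re + (matPosPart ((a : ℂ) • G - X)).trace.re - a * p)
    (Pm : ℕ → Matrix (Fin n) (Fin n) ℂ)
    (hPm : ∀ m < M + 1, (Pm m).PosSemidef)
    (hPsum : ∑ m ∈ Finset.range (M + 1), Pm m = 1)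
    (hPI : (G * Pm M).trace.re = p) :
    (∀ a : ℝ, 0 ≤ a → ∑ m ∈ Finset.range M, ((ρ m * Pm m).trace).re ≤ s a) ∧
    (∑ m ∈ Finset.range M, ((ρ m * Pm m).trace).re ≤ 1 - p) ∧
    (∀ (A : Finset ℝ) (hA : A.Nonempty), (∀ a ∈ A, 0 ≤ a) →
      ∑ m ∈ Finset.range M, ((ρ m * Pm m).trace).re ≤ min (1 - p) (A.inf' hA s)) :=
  stmt_9_general ρ hρ hρsum G hG p X hX hXρ s hs Pm hPm hPsum hPI
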